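/- arXiv:2402.08384 — 2 statements merged into one kernel-verified Lean document; each statement's English description precedes it below -/
import Mathlib

section
/- For any probability vector f over K classes with all entries positive, any class label y, and any γ ≥ 0, the focal loss satisfies -(1 - f^y)^γ log f^y ≥ -log f^y - γ·H(f), where H(f) = -∑_k f^k log f^k is the Shannon entropy. (Equivalently, the focal loss upper-bounds the cross-entropy minus γ times the entropy of the prediction.) -/
open Finset Real

/-- Shannon entropy of a probability vector. -/
noncomputable def shannonEntropy {K : ℕ} (f : Fin K → ℝ) : ℝ := -∑ k, f k * Real.log (f k)

/-- `2 t log t - t² + 1` is antitone on `(0,∞)`. -/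
lemma aux_antitone : AntitoneOn (fun t : ℝ => 2 * (t * Real.log t) - t ^ 2 + 1) (Set.Ioi 0) := by
  apply antitoneOn_of_deriv_nonpos (convex_Ioi 0)
  case hf' =>
    apply DifferentiableOn.add
    apply DifferentiableOn.sub
    · exact DifferentiableOn.const_mul (DifferentiableOn.mul differentiableOn_id
        (Real.differentiableOn_log.mono (by rw [interior_Ioi]; intro x hx; simp at hx ⊢; exact ne_of_gt hx))) 2
    · exact (differentiableOn_pow 2)
    · exact differentiableOn_const 1
  · apply ContinuousOn.add
    · apply ContinuousOn.sub
      · exact (continuousOn_const.mul (continuousOn_id.mul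
          (Real.continuousOn_log.mono (by intro x hx; simp at hx ⊢; exact ne_of_gt hx))))
      · exact (continuousOn_pow 2)
    · exact continuousOn_const
  · intro x hx
    rw [interior_Ioi] at hx
    have hx0 : (x : ℝ) ≠ 0 := ne_of_gt hx
    have hd : HasDerivAt (fun t : ℝ => 2 * (t * Real.log t) - t ^ 2 + 1)
        (2 * (Real.log x + 1) - 2 * x ^ 1) x := by
      exact (((Real.hasDerivAt_mul_log hx0).const_mul 2).sub (hasDerivAt_pow 2 x)).add_const 1
    rw [hd.deriv]
    have := Real.log_le_sub_one_of_pos hx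
    simp only [pow_one]
    linarith

/-- For `x ∈ (0,1]`, `-log x ≤ (1-x)/√x`. -/
lemma neg_log_le_div_sqrt (x : ℝ) (hx0 : 0 < x) (hx1 : x ≤ 1) :
    -Real.log x ≤ (1 - x) / Real.sqrt x := by
  set t := Real.sqrt x with ht
  have ht0 : 0 < t := Real.sqrt_pos.mpr hx0
  have ht2 : t ^ 2 = x := Real.sq_sqrt hx0.le
  have ht1 : t ≤ 1 := Real.sqrt_le_one.mpr hx1
  have hmem1 : (t : ℝ) ∈ Set.Ioi (0:ℝ) := ht0
  have hmem2 : (1 : ℝ) ∈ Set.Ioi (0:ℝ) := by norm_num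
  have h := aux_antitone hmem1 hmem2 ht1
  simp only [Real.log_one] at h
  -- h : 2*(1*0) - 1^2 + 1 ≤ 2*(t*log t) - t^2 + 1
  have hlt : Real.log t = Real.log x / 2 := Real.log_sqrt hx0.le
  rw [hlt, ht2] at h
  have h' : 0 ≤ t * Real.log x - x + 1 := by
    have : 2 * (t * (Real.log x / 2)) = t * Real.log x := by ring
    rw [this] at h
    norm_num at h
    linarith
  rw [le_div_iff₀ ht0]
  nlinarith

/-- Key binary inequality, case `p ≤ 1/2`. -/
lemma key_half (p : ℝ) (hp0 : 0 < p) (hp : p ≤ 1 / 2) :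
    (-Real.log p) * (-Real.log (1 - p)) ≤
      p * (-Real.log p) + (1 - p) * (-Real.log (1 - p)) := by
  have hp1 : p < 1 := by linarith
  set A := -Real.log p with hA_def
  set B := -Real.log (1 - p) with hB_def
  have h1p0 : (0:ℝ) < 1 - p := by linarith
  set s := Real.sqrt (1 - p) with hs_def
  set sp := Real.sqrt p with hsp_def
  have hs0 : 0 < s := Real.sqrt_pos.mpr h1p0
  have hsp0 : 0 < sp := Real.sqrt_pos.mpr hp0
  have hs2 : s ^ 2 = 1 - p := Real.sq_sqrt h1p0.le
  have hsp2 : sp ^ 2 = p := Real.sq_sqrt hp0.le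
  have hs1 : s ≤ 1 := Real.sqrt_le_one.mpr (by linarith)
  have hsps : sp ≤ s := Real.sqrt_le_sqrt (by linarith)
  have hA : 0 ≤ A := by
    rw [hA_def]; simp only [neg_nonneg]
    exact Real.log_nonpos hp0.le hp1.le
  have hB : 0 ≤ B := by
    rw [hB_def]; simp only [neg_nonneg]
    exact Real.log_nonpos h1p0.le (by linarith)
  -- B ≤ p / s
  have hB_ub : B * s ≤ p := by
    have := neg_log_le_div_sqrt (1 - p) h1p0 (by linarith)
    rw [show (1 - (1 - p)) = p by ring] at this
    rw [← hs_def, ← hB_def] at this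
    calc B * s ≤ (p / s) * s := by
          exact mul_le_mul_of_nonneg_right this hs0.le
      _ = p := by field_simp
  -- A ≤ (1-p)/sp
  have hA_ub : A * sp ≤ 1 - p := by
    have := neg_log_le_div_sqrt p hp0 hp1.le
    rw [← hsp_def, ← hA_def] at this
    calc A * sp ≤ ((1 - p) / sp) * sp := by
          exact mul_le_mul_of_nonneg_right this hsp0.le
      _ = 1 - p := by field_simp
  -- p ≤ B
  have hBp : p ≤ B := by
    have := Real.log_le_sub_one_of_pos h1p0
    rw [hB_def]; linarith
  -- 1 - s ≤ p
  have h1ms : 1 - s ≤ p := by nlinarith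
  -- chain: A*B*s ≤ A*p ≤ (p*A + (1-p)*B)*s
  have c1 : A * B * s ≤ A * p := by nlinarith
  have c2 : A * p ≤ (1 - p) * sp := by nlinarith
  have c3 : (1 - p) * sp ≤ (1 - p) * s := by nlinarith
  have c4 : A * (1 - s) ≤ (1 - p) * s := by nlinarith
  have c5 : p * A * (1 - s) ≤ (1 - p) * B * s := by nlinarith
  have c6 : A * B * s ≤ (p * A + (1 - p) * B) * s := by nlinarith
  exact le_of_mul_le_mul_right c6 hs0

/-- Key binary inequality. -/
lemma key_binary (p : ℝ) (hp0 : 0 < p) (hp1 : p < 1) :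
    (-Real.log p) * (-Real.log (1 - p)) ≤
      p * (-Real.log p) + (1 - p) * (-Real.log (1 - p)) := by
  rcases le_or_gt p (1 / 2) with h | h
  · exact key_half p hp0 h
  · have h' := key_half (1 - p) (by linarith) (by linarith)
    rw [show (1 - (1 - p)) = p by ring] at h'
    have hc : (-Real.log (1 - p)) * (-Real.log p) = (-Real.log p) * (-Real.log (1 - p)) :=
      mul_comm _ _
    linarith [h', hc.le, hc.ge]

/-- Grouping bound: the entropy dominates the binary entropy of `(p, 1-p)`. -/
lemma entropy_ge_binary {K : ℕ} (f : Fin K → ℝ)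
    (hf0 : ∀ k, 0 < f k) (hsum : ∑ k, f k = 1) (y : Fin K) (hfy : f y < 1) :
    f y * (-Real.log (f y)) + (1 - f y) * (-Real.log (1 - f y)) ≤ shannonEntropy f := by
  have h1p0 : (0:ℝ) < 1 - f y := by linarith
  have hsplit : ∑ k ∈ (Finset.univ.erase y), f k = 1 - f y := by
    have := Finset.sum_erase_add Finset.univ f (Finset.mem_univ y)
    linarith [hsum, this]
  have hle : ∀ k ∈ Finset.univ.erase y, f k ≤ 1 - f y := by
    intro k hk
    rw [← hsplit]
    exact Finset.single_le_sum (f := f) (fun i _ => (hf0 i).le) hk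
  have hterm : ∀ k ∈ Finset.univ.erase y, f k * Real.log (f k) ≤ f k * Real.log (1 - f y) := by
    intro k hk
    exact mul_le_mul_of_nonneg_left
      (Real.log_le_log (hf0 k) (hle k hk)) (hf0 k).le
  have hsum2 : ∑ k ∈ (Finset.univ.erase y), f k * Real.log (f k) ≤
      (1 - f y) * Real.log (1 - f y) := by
    calc ∑ k ∈ (Finset.univ.erase y), f k * Real.log (f k)
        ≤ ∑ k ∈ (Finset.univ.erase y), f k * Real.log (1 - f y) :=
          Finset.sum_le_sum hterm
      _ = (∑ k ∈ (Finset.univ.erase y), f k) * Real.log (1 - f y) := by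
          rw [Finset.sum_mul]
      _ = (1 - f y) * Real.log (1 - f y) := by rw [hsplit]
  have htotal : ∑ k, f k * Real.log (f k) =
      f y * Real.log (f y) + ∑ k ∈ (Finset.univ.erase y), f k * Real.log (f k) := by
    rw [← Finset.sum_erase_add Finset.univ _ (Finset.mem_univ y)]
    ring
  unfold shannonEntropy
  rw [htotal]
  nlinarith [hsum2]

/-- Focal loss upper-bounds cross-entropy minus `γ` times the entropy of the prediction. -/
theorem focal_loss_lower_bound {K : ℕ} (f : Fin K → ℝ)
    (hf0 : ∀ k, 0 < f k) (hf1 : ∀ k, f k ≤ 1) (hsum : ∑ k, f k = 1)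
    (y : Fin K) (γ : ℝ) (hγ : 0 ≤ γ) :
    -(1 - f y) ^ γ * Real.log (f y) ≥
      -Real.log (f y) - γ * shannonEntropy f := by
  have hH : 0 ≤ shannonEntropy f := by
    unfold shannonEntropy
    simp only [neg_nonneg]
    apply Finset.sum_nonpos
    intro k _
    exact mul_nonpos_of_nonneg_of_nonpos (hf0 k).le (Real.log_nonpos (hf0 k).le (hf1 k))
  rcases eq_or_lt_of_le (hf1 y) with heq | hlt
  · rw [heq]
    simp only [Real.log_one, mul_zero, sub_self, neg_zero, zero_sub, ge_iff_le,
      neg_nonpos]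
    positivity
  · set p := f y with hp_def
    have hp0 : 0 < p := hf0 y
    have h1p0 : (0:ℝ) < 1 - p := by linarith
    set A := -Real.log p with hA_def
    set B := -Real.log (1 - p) with hB_def
    have hA : 0 < A := by
      rw [hA_def]; simp only [neg_pos]
      exact Real.log_neg hp0 hlt
    have hrpow : (1 - p) ^ γ = Real.exp (γ * Real.log (1 - p)) := by
      rw [Real.rpow_def_of_pos h1p0 γ, mul_comm]
    have hexp : 1 + γ * Real.log (1 - p) ≤ (1 - p) ^ γ := by
      rw [hrpow]
      linarith [Real.add_one_le_exp (γ * Real.log (1 - p))]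
    have h1 : (1 + γ * Real.log (1 - p)) * A ≤ (1 - p) ^ γ * A :=
      mul_le_mul_of_nonneg_right hexp hA.le
    have h2 : A * B ≤ p * A + (1 - p) * B := key_binary p hp0 hlt
    have h3 : p * A + (1 - p) * B ≤ shannonEntropy f := by
      have := entropy_ge_binary f hf0 hsum y hlt
      rw [← hp_def, ← hA_def, ← hB_def] at this
      nlinarith [this]
    have h4 : γ * (A * B) ≤ γ * shannonEntropy f :=
      mul_le_mul_of_nonneg_left (h2.trans h3) hγ
    have hgoal : -(1 - p) ^ γ * Real.log p = (1 - p) ^ γ * A := by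
      rw [hA_def]; ring
    rw [ge_iff_le, hgoal]
    have hLB : Real.log (1 - p) = -B := by rw [hB_def]; ring
    rw [hLB] at h1
    nlinarith [h1, h4]
end

section
/- Let σ be the logistic sigmoid and fix η ∈ (0, 1/2) and ε ∈ (0,1). For every p ∈ (1/2, 1), |p - σ(σ^{-1}(p)/(1-η))| < |p - σ(σ^{-1}(p)/((1-ε)(1-2η)))|. That is, the pointwise calibration error of the DReg estimator (logit scaling 1/(1-η)) is strictly smaller than that of the label-smoothing baseline (logit scaling 1/((1-ε)(1-2η))). -/
/-!
Write `t = logit p`, so that `p = σ t` and `t > 0` for `p > 1/2`. Both estimators rescale the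
logit by a factor at least `1`, and the baseline factor `1/((1-ε)(1-2η))` exceeds the DReg factor
`1/(1-η)`. Since `σ` is strictly increasing, `p = σ t ≤ σ (t/(1-η)) < σ (t/((1-ε)(1-2η)))`:
both estimators overshoot `p`, and the baseline overshoots further.
-/

open Real

noncomputable def sigmoid (t : ℝ) : ℝ := 1 / (1 + Real.exp (-t))

noncomputable def logit (p : ℝ) : ℝ := Real.log (p / (1 - p))

theorem sigmoid_eq_real_sigmoid : _root_.sigmoid = Real.sigmoid := by
  funext t
  rw [_root_.sigmoid, Real.sigmoid_def, one_div]

theorem Real.sigmoid_logit {p : ℝ} (h0 : 0 < p) (h1 : p < 1) : Real.sigmoid (logit p) = p := by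
  have h1' : 0 < 1 - p := sub_pos.mpr h1
  rw [Real.sigmoid_def, logit, Real.exp_neg, Real.exp_log (div_pos h0 h1')]
  field_simp
  ring

theorem logit_pos {p : ℝ} (h0 : 1 / 2 < p) (h1 : p < 1) : 0 < logit p :=
  Real.log_pos <| (one_lt_div (by linarith)).mpr (by linarith)

theorem Real.abs_sigmoid_sub_sigmoid_div_lt {t a b : ℝ} (ht : 0 < t) (hb : 0 < b) (hba : b < a)
    (ha : a ≤ 1) :
    |Real.sigmoid t - Real.sigmoid (t / a)| < |Real.sigmoid t - Real.sigmoid (t / b)| := by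
  have hle : Real.sigmoid t ≤ Real.sigmoid (t / a) :=
    Real.sigmoid_le (le_div_self ht.le (hb.trans hba) ha)
  have hlt : Real.sigmoid (t / a) < Real.sigmoid (t / b) :=
    Real.sigmoid_lt (div_lt_div_of_pos_left ht hb hba)
  rw [abs_sub_comm, abs_of_nonneg (sub_nonneg.mpr hle), abs_sub_comm,
    abs_of_pos (sub_pos.mpr (hle.trans_lt hlt))]
  linarith

/-- The pointwise calibration error of the DReg estimator (logit scaling `1/(1-η)`) is
strictly smaller than that of the label-smoothing baseline
(logit scaling `1/((1-ε)(1-2η))`). -/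
theorem dreg_pointwise_calibration_error_lt_baseline
    (η ε : ℝ) (hη : η ∈ Set.Ioo (0 : ℝ) (1/2)) (hε : ε ∈ Set.Ioo (0 : ℝ) 1)
    (p : ℝ) (hp : p ∈ Set.Ioo (1/2 : ℝ) 1) :
    |p - _root_.sigmoid (logit p / (1 - η))| <
      |p - _root_.sigmoid (logit p / ((1 - ε) * (1 - 2 * η)))| := by
  obtain ⟨hη0, hη2⟩ := hη
  obtain ⟨hε0, hε1⟩ := hε
  obtain ⟨hp2, hp1⟩ := hp
  have hbaseline_pos : 0 < (1 - ε) * (1 - 2 * η) := mul_pos (by linarith) (by linarith)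
  have hbaseline_lt : (1 - ε) * (1 - 2 * η) < 1 - η := by nlinarith
  have key := Real.abs_sigmoid_sub_sigmoid_div_lt (logit_pos hp2 hp1) hbaseline_pos hbaseline_lt
    (by linarith)
  rwa [Real.sigmoid_logit (by linarith) hp1, ← sigmoid_eq_real_sigmoid] at key
end
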